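/- arXiv:1907.09938 — 5 statements merged into one kernel-verified Lean document; each statement's English description precedes it below -/
import Mathlib

section
/- Suppose s, c, d are real differentiable functions on an interval with s² + c² = 1, 4k²s² = (1 − d)(2 + d)², s' = c·d, and c' = −s·d, where 0 < k < 1, and assume d ≠ −2 on the interval. Then d' = −(8/3)·k²·s·c/(2 + d). -/
theorem deriv_d (k : ℝ) (hk0 : 0 < k) (hk1 : k < 1) (I : Set ℝ) (hI : IsOpen I)
    (s c d : ℝ → ℝ) (d' : ℝ → ℝ)
    (hsc : ∀ u ∈ I, s u ^ 2 + c u ^ 2 = 1)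
    (hsd : ∀ u ∈ I, 4 * k ^ 2 * s u ^ 2 = (1 - d u) * (2 + d u) ^ 2)
    (hs' : ∀ u ∈ I, HasDerivAt s (c u * d u) u)
    (hc' : ∀ u ∈ I, HasDerivAt c (-(s u * d u)) u)
    (hd' : ∀ u ∈ I, HasDerivAt d (d' u) u)
    (hd2 : ∀ u ∈ I, 2 + d u ≠ 0) :
    ∀ u ∈ I, d' u = -(8/3) * k ^ 2 * (s u * c u) / (2 + d u) := by
  intro u hu
  have h2 := hd2 u hu
  have hsc1 := hsc u hu
  have hsd1 := hsd u hu
  have hs2 : s u ^ 2 ≤ 1 := by nlinarith [sq_nonneg (c u)]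
  have h0 : d u ≠ 0 := by
    intro h
    rw [h] at hsd1
    nlinarith [sq_nonneg (s u)]
  have hA : HasDerivAt (fun x => 4 * k ^ 2 * s x ^ 2)
      (4 * k ^ 2 * (2 * s u ^ 1 * (c u * d u))) u :=
    ((hs' u hu).pow 2).const_mul _
  have hB : HasDerivAt (fun x => (1 - d x) * (2 + d x) ^ 2)
      ((0 - d' u) * (2 + d u) ^ 2 +
        (1 - d u) * (2 * (2 + d u) ^ 1 * (0 + d' u))) u := by
    exact ((hasDerivAt_const u (1:ℝ)).sub (hd' u hu)).mul
      (((hasDerivAt_const u (2:ℝ)).add (hd' u hu)).pow 2)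
  have hEq : (fun x => 4 * k ^ 2 * s x ^ 2) =ᶠ[nhds u]
      (fun x => (1 - d x) * (2 + d x) ^ 2) := by
    filter_upwards [hI.mem_nhds hu] with x hx using hsd x hx
  have key := hA.unique (hB.congr_of_eventuallyEq hEq)
  have h2' : (2 + d u) ≠ 0 := h2
  have key2 : d u * (d' u * (3 * (2 + d u)) + 8 * k ^ 2 * (s u * c u)) = 0 := by
    linear_combination key
  have key3 : d' u * (3 * (2 + d u)) + 8 * k ^ 2 * (s u * c u) = 0 :=
    (mul_eq_zero.mp key2).resolve_left h0
  field_simp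
  linarith
end

section
/- Suppose s, c, d are real differentiable functions on an interval satisfying s² + c² = 1, 4k²s² = (1 − d)(2 + d)², and d' = −(8/3)k²·s·c/(2 + d), with 2 + d nonvanishing. Then (d')² = (4/9)(1 − d)(d³ + 3d² + 4k² − 4). -/
theorem d_ode (k : ℝ) (hk0 : 0 < k) (hk1 : k < 1) (I : Set ℝ) (hI : IsOpen I)
    (s c d : ℝ → ℝ) (d' : ℝ → ℝ)
    (hsc : ∀ u ∈ I, s u ^ 2 + c u ^ 2 = 1)
    (hsd : ∀ u ∈ I, 4 * k ^ 2 * s u ^ 2 = (1 - d u) * (2 + d u) ^ 2)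
    (hd' : ∀ u ∈ I, HasDerivAt d (d' u) u)
    (hderiv : ∀ u ∈ I, d' u = -(8/3) * k ^ 2 * (s u * c u) / (2 + d u))
    (hd2 : ∀ u ∈ I, 2 + d u ≠ 0) :
    ∀ u ∈ I, d' u ^ 2 = (4/9) * (1 - d u) * (d u ^ 3 + 3 * d u ^ 2 + 4 * k ^ 2 - 4) := by
  intro u hu
  have h1 := hsc u hu
  have h2 := hsd u hu
  have h3 := hderiv u hu
  have h4 := hd2 u hu
  rw [h3]
  rw [div_pow]
  rw [div_eq_iff (pow_ne_zero 2 h4)]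
  linear_combination ((64:ℝ)/9*k^4*s u^2) * h1 + ((16:ℝ)/9*k^2 - (4:ℝ)/9*(4*k^2*s u^2 + (1 - d u)*(2+d u)^2)) * h2
end

section
/- For 0 < k < 1, the cubic polynomial w³ − w² + (1/3)(16k² − 15)w − (1/27)(9 − 8k²)² has exactly one real root, and that root is positive. -/
set_option maxHeartbeats 1000000


theorem cubic_unique_real_root (k : ℝ) (hk0 : 0 < k) (hk1 : k < 1) :
    (∃! w : ℝ, w ^ 3 - w ^ 2 + (1/3) * (16 * k ^ 2 - 15) * w
      - (1/27) * (9 - 8 * k ^ 2) ^ 2 = 0) ∧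
    ∀ w : ℝ, w ^ 3 - w ^ 2 + (1/3) * (16 * k ^ 2 - 15) * w
      - (1/27) * (9 - 8 * k ^ 2) ^ 2 = 0 → 0 < w := by
  set c : ℝ := (1/3) * (16 * k ^ 2 - 15) with hc
  set d : ℝ := (1/27) * (9 - 8 * k ^ 2) ^ 2 with hd
  have hk2 : k ^ 2 < 1 := by nlinarith
  -- positivity of any root
  have hpos : ∀ w : ℝ, w ^ 3 - w ^ 2 + c * w - d = 0 → 0 < w := by
    intro w hw
    by_contra h
    push_neg at h
    have ht : 0 ≤ -w := by linarith
    have hid : (8 * k ^ 2 + 9 * (-w) - 9) ^ 2 + 27 * (-w) * ((-w) - 1) ^ 2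
        = -27 * (w ^ 3 - w ^ 2 + c * w - d) := by
      rw [hc, hd]; ring
    rw [hw] at hid
    have h1 : (0:ℝ) ≤ (8 * k ^ 2 + 9 * (-w) - 9) ^ 2 := sq_nonneg _
    have h2 : (0:ℝ) ≤ 27 * (-w) * ((-w) - 1) ^ 2 := by positivity
    have hs : (8 * k ^ 2 + 9 * (-w) - 9) ^ 2 = 0 := by linarith
    have hm : 27 * (-w) * ((-w) - 1) ^ 2 = 0 := by linarith
    have hs' : 8 * k ^ 2 + 9 * (-w) - 9 = 0 := by
      exact pow_eq_zero_iff (by norm_num) |>.mp hs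
    rcases mul_eq_zero.mp hm with h3 | h3
    · rcases mul_eq_zero.mp h3 with h4 | h4
      · norm_num at h4
      · nlinarith
    · have : -w = 1 := by nlinarith [sq_nonneg ((-w) - 1)]
      nlinarith
  -- existence via IVT
  have hcont : Continuous fun w : ℝ => w ^ 3 - w ^ 2 + c * w - d := by continuity
  have hf0 : (0:ℝ) ^ 3 - (0:ℝ) ^ 2 + c * 0 - d < 0 := by
    rw [hd]; nlinarith
  have hf3 : (0:ℝ) < (3:ℝ) ^ 3 - (3:ℝ) ^ 2 + c * 3 - d := by
    rw [hc, hd]; nlinarith [mul_pos hk0 hk0, sq_nonneg (k^2)]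
  obtain ⟨r, hr_mem, hr⟩ := intermediate_value_Icc (by norm_num : (0:ℝ) ≤ 3)
    hcont.continuousOn (by constructor <;> simp <;> linarith : (0:ℝ) ∈ Set.Icc _ _)
  -- uniqueness
  have huniq : ∀ u v : ℝ, u ^ 3 - u ^ 2 + c * u - d = 0 →
      v ^ 3 - v ^ 2 + c * v - d = 0 → u = v := by
    intro u v hu hv
    by_contra hne
    have hQ : u ^ 2 + u * v + v ^ 2 - (u + v) + c = 0 := by
      have h0 : (u - v) * (u ^ 2 + u * v + v ^ 2 - (u + v) + c) = 0 := by
        linear_combination hu - hv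
      rcases mul_eq_zero.mp h0 with h | h
      · exact absurd (by linarith [sub_eq_zero.mp h] : u = v) hne
      · exact h
    have hP : u * v * (1 - u - v) - d = 0 := by linear_combination hu - u * hQ
    set t : ℝ := 1 - u - v with htdef
    have hft : t ^ 3 - t ^ 2 + c * t - d = 0 := by
      rw [htdef]; linear_combination (1 - u - v) * hQ + hP
    have htpos : 0 < t := hpos t hft
    have hdisc : (u - v) ^ 2 = -3 * t ^ 2 + 2 * t + 1 - 4 * c := by
      rw [htdef]; linear_combination 4 * hQ
    have hgt : 0 < -3 * t ^ 2 + 2 * t + 1 - 4 * c := by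
      rw [← hdisc]
      have huv : u - v ≠ 0 := sub_ne_zero.mpr hne
      positivity
    clear_value t
    clear hdisc hP hQ hu hv hne hr hr_mem hf3 hf0 hcont hpos
    rw [hc] at hgt
    rw [hc, hd] at hft
    clear_value c d
    clear hc hd
    nlinarith [sq_nonneg (t-3), sq_nonneg (t-3+k^2), mul_pos hk0 hk0, sq_nonneg k,
      mul_pos htpos (mul_pos hk0 hk0), sq_nonneg (3*t-9+8*k^2), sq_nonneg (t*k),
      mul_nonneg (sq_nonneg (t-3)) htpos.le]
  refine ⟨⟨r, hr, fun y hy => huniq y r hy hr⟩, hpos⟩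
end

section
/- For 0 < k < 1, the quartic polynomial f(z) = 12z(4z³ − g₂z − g₃) − (6z² − g₂/2)², with g₂ = (4/27)(9−8k²) and g₃ = (8/729)(8k⁴−36k²+27), has exactly two real roots: z = −1/3 and one positive real root. -/
/-- The cubic factor `c(z) = 12 z^3 - 4 z^2 + p z + q` of the quartic has a
unique real root. -/
lemma cubic_unique (k t z : ℝ) (hk0 : 0 < k) (hk1 : k < 1)
    (ht : 12*t^3 - 4*t^2 + (64*k^2/9 - 20/3)*t
        + (-256*k^4/243 + 64*k^2/27 - 4/3) = 0)
    (hz : 12*z^3 - 4*z^2 + (64*k^2/9 - 20/3)*z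
        + (-256*k^4/243 + 64*k^2/27 - 4/3) = 0) : z = t := by
  have hfac : (z - t) * (12*(z^2 + z*t + t^2) - 4*(z + t) + (64*k^2/9 - 20/3)) = 0 := by
    linear_combination hz - ht
  rcases mul_eq_zero.mp hfac with h | hQ
  · linarith [sub_eq_zero.mp h]
  · exfalso
    have hkey : (36*t^2 - 8*t + 64*k^2/9 - 20/3)^2
        * (432*t^2 - 96*t + 48*(64*k^2/9 - 20/3) - 16)
        = 1048576/243 * (k^2*(1 - k^2))^2 := by
      linear_combination (46656*t^3 - 15552*t^2 + (27648*k^2 - 25920)*t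
        + 4096*k^4 - 15360*k^2 + 11200) * ht
    have hmpos : 0 < k^2 * (1 - k^2) := mul_pos (pow_pos hk0 2) (by nlinarith)
    have hE : 0 < 432*t^2 - 96*t + 48*(64*k^2/9 - 20/3) - 16 := by
      by_contra hle
      push_neg at hle
      have h1 : (36*t^2 - 8*t + 64*k^2/9 - 20/3)^2
          * (432*t^2 - 96*t + 48*(64*k^2/9 - 20/3) - 16) ≤ 0 :=
        mul_nonpos_of_nonneg_of_nonpos (sq_nonneg _) hle
      nlinarith [mul_pos hmpos hmpos]
    nlinarith [sq_nonneg (24*z + 12*t - 4), hE, hQ]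

/-- Existence of a positive root of the cubic factor. -/
lemma cubic_exists (k : ℝ) (hk0 : 0 < k) (hk1 : k < 1) :
    ∃ t : ℝ, 0 < t ∧ 12*t^3 - 4*t^2 + (64*k^2/9 - 20/3)*t
        + (-256*k^4/243 + 64*k^2/27 - 4/3) = 0 := by
  set c : ℝ → ℝ := fun z => 12*z^3 - 4*z^2 + (64*k^2/9 - 20/3)*z
        + (-256*k^4/243 + 64*k^2/27 - 4/3) with hc
  have hcont : ContinuousOn c (Set.Icc (0:ℝ) 2) := by
    apply Continuous.continuousOn
    fun_prop
  have hk2 : k^2 < 1 := by nlinarith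
  have hc0 : c 0 < 0 := by
    simp only [hc]
    nlinarith [sq_nonneg (16*k^2 - 18), sq_nonneg k]
  have hc2 : 0 < c 2 := by
    simp only [hc]
    nlinarith [sq_nonneg k, sq_nonneg (k^2)]
  have hmem : (0:ℝ) ∈ Set.Ioo (c 0) (c 2) := ⟨hc0, hc2⟩
  obtain ⟨t, htmem, htval⟩ := intermediate_value_Ioo (by norm_num : (0:ℝ) ≤ 2) hcont hmem
  exact ⟨t, htmem.1, htval⟩

theorem quartic_real_roots (k : ℝ) (hk0 : 0 < k) (hk1 : k < 1) :
    ∃ z₀ : ℝ, 0 < z₀ ∧ ∀ z : ℝ,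
      (12 * z * (4 * z ^ 3 - ((4/27) * (9 - 8 * k ^ 2)) * z
          - (8/729) * (8 * k ^ 4 - 36 * k ^ 2 + 27))
        - (6 * z ^ 2 - ((4/27) * (9 - 8 * k ^ 2)) / 2) ^ 2 = 0) ↔
      z = -1/3 ∨ z = z₀ := by
  obtain ⟨t, ht0, ht⟩ := cubic_exists k hk0 hk1
  refine ⟨t, ht0, fun z => ⟨fun hf => ?_, fun h => ?_⟩⟩
  · have hfac : (z + 1/3) * (12*z^3 - 4*z^2 + (64*k^2/9 - 20/3)*z
        + (-256*k^4/243 + 64*k^2/27 - 4/3)) = 0 := by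
      linear_combination hf
    rcases mul_eq_zero.mp hfac with h | h
    · left; linarith
    · right; exact cubic_unique k t z hk0 hk1 ht h
  · rcases h with h | h
    · subst h; ring
    · subst h; linear_combination (z + 1/3) * ht
end

section
/- Suppose b is a real number with 4b³ − g₂b − g₃ ≠ 0 satisfying 12b(4b³ − g₂b − g₃) = (6b² − g₂/2)², where g₂ = (4/27)(9−8k²), g₃ = (8/729)(8k⁴−36k²+27), and 0 < k < 1. If b < 0, then b = −1/3. -/
theorem negative_solution_unique (k b : ℝ) (hk0 : 0 < k) (hk1 : k < 1)
    (hne : 4 * b ^ 3 - ((4/27) * (9 - 8 * k ^ 2)) * b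
      - (8/729) * (8 * k ^ 4 - 36 * k ^ 2 + 27) ≠ 0)
    (heq : 12 * b * (4 * b ^ 3 - ((4/27) * (9 - 8 * k ^ 2)) * b
        - (8/729) * (8 * k ^ 4 - 36 * k ^ 2 + 27)) =
      (6 * b ^ 2 - ((4/27) * (9 - 8 * k ^ 2)) / 2) ^ 2)
    (hb : b < 0) :
    b = -1/3 := by
  have hR : 324 * b * (3*b+1)^2 - (16*k^2 - 18*(3*b+1))^2 < 0 := by
    rcases eq_or_ne (3*b+1) 0 with h | h
    · rw [h]
      have : 0 < k ^ 2 := pow_pos hk0 2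
      nlinarith
    · have h1 : 0 < (3*b+1)^2 := by positivity
      nlinarith [sq_nonneg (16*k^2 - 18*(3*b+1))]
  have h1 : (3*b+1) * (324 * b * (3*b+1)^2 - (16*k^2 - 18*(3*b+1))^2) = 0 := by
    linear_combination 729 * heq
  rcases mul_eq_zero.mp h1 with h | h
  · linarith
  · linarith [hR, h.ge]
end
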